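/- arXiv:2205.04417 — 4 statements merged into one kernel-verified Lean document; each statement's English description precedes it below -/
import Mathlib

section
/- Let K, M ∈ ℝ^{n×n} be symmetric and invertible, let z_{-M_-}, …, z_{M_+} be real numbers such that each K + z_jM is invertible, let w_{-M_-}, …, w_{M_+} be real weights, and let r be a natural number. Define C = (Σ_{j=-M_-}^{M_+} w_j (K + z_jM)^{-1}M) (K^{-1}M)^r. Then C is self-adjoint with respect to the M-weighted inner product ⟨u, v⟩_M = uᵀMv, i.e., CᵀM = MC (equivalently, M^{-1}CᵀM = C). -/
/-!
With `X = K⁻¹M`, symmetry of `K` and `M` makes `X` and every `(K + zM)⁻¹M` self-adjoint for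
`⟨u, v⟩_M = uᵀMv`. Writing `K + zM = K(1 + zX)` gives `(K + zM)⁻¹M = (1 + zX)⁻¹X`, a function
of `X`, so all these operators commute. Sums, scalar multiples and products of commuting
`M`-self-adjoint matrices are again `M`-self-adjoint, which gives the claim for `C`.
-/

open Matrix

namespace Matrix

variable {ι R : Type*} [Fintype ι] [CommRing R]

/-- `B` is self-adjoint for the bilinear form `⟨u, v⟩_M = uᵀMv`. -/
def IsSelfAdjointWrt (M B : Matrix ι ι R) : Prop :=
  Bᵀ * M = M * B

namespace IsSelfAdjointWrt

variable {M A B : Matrix ι ι R}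

theorem mul_of_commute (hA : IsSelfAdjointWrt M A) (hB : IsSelfAdjointWrt M B)
    (hAB : Commute A B) : IsSelfAdjointWrt M (A * B) := by
  unfold IsSelfAdjointWrt at *
  rw [transpose_mul, Matrix.mul_assoc, hA, ← Matrix.mul_assoc, hB, Matrix.mul_assoc, hAB.eq]

theorem smul (hA : IsSelfAdjointWrt M A) (c : R) : IsSelfAdjointWrt M (c • A) := by
  unfold IsSelfAdjointWrt at *
  rw [transpose_smul, Matrix.smul_mul, Matrix.mul_smul, hA]

theorem sum {κ : Type*} (s : Finset κ) {A : κ → Matrix ι ι R}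
    (hA : ∀ j ∈ s, IsSelfAdjointWrt M (A j)) : IsSelfAdjointWrt M (∑ j ∈ s, A j) := by
  unfold IsSelfAdjointWrt at *
  rw [transpose_sum, Finset.sum_mul, Finset.mul_sum]
  exact Finset.sum_congr rfl hA

variable [DecidableEq ι]

theorem pow (hA : IsSelfAdjointWrt M A) : ∀ k : ℕ, IsSelfAdjointWrt M (A ^ k)
  | 0 => by simp [IsSelfAdjointWrt]
  | k + 1 => by
    rw [pow_succ]
    exact (hA.pow k).mul_of_commute hA ((Commute.refl A).pow_left k)

end IsSelfAdjointWrt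

variable [DecidableEq ι]

theorem isSelfAdjointWrt_inv_mul {K M : Matrix ι ι R} (hK : K.IsSymm) (hM : M.IsSymm) :
    IsSelfAdjointWrt M (K⁻¹ * M) := by
  rw [IsSelfAdjointWrt, transpose_mul, transpose_nonsing_inv, hK.eq, hM.eq, Matrix.mul_assoc]

theorem commute_nonsing_inv_right {A B : Matrix ι ι R} (h : Commute A B) : Commute A B⁻¹ := by
  rw [nonsing_inv_eq_ringInverse]
  by_cases hB : IsUnit B
  · obtain ⟨u, rfl⟩ := hB
    rw [Ring.inverse_unit]
    exact h.units_inv_right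
  · rw [Ring.inverse_non_unit _ hB]
    exact Commute.zero_right A

theorem inv_add_smul_mul_eq {K : Matrix ι ι R} (hK : IsUnit K) (M : Matrix ι ι R) (z : R) :
    (K + z • M)⁻¹ * M = (1 + z • (K⁻¹ * M))⁻¹ * (K⁻¹ * M) := by
  have hfactor : K + z • M = K * (1 + z • (K⁻¹ * M)) := by
    rw [Matrix.mul_add, Matrix.mul_one, Matrix.mul_smul, ← Matrix.mul_assoc,
      mul_nonsing_inv _ ((isUnit_iff_isUnit_det K).mp hK), Matrix.one_mul]
  rw [hfactor, mul_inv_rev, Matrix.mul_assoc]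

theorem commute_inv_mul_inv_add_smul_mul {K : Matrix ι ι R} (hK : IsUnit K)
    (M : Matrix ι ι R) (z : R) : Commute (K⁻¹ * M) ((K + z • M)⁻¹ * M) := by
  set X := K⁻¹ * M
  have hX : Commute X (1 + z • X) :=
    (Commute.one_right X).add_right ((Commute.refl X).smul_right z)
  rw [inv_add_smul_mul_eq hK]
  exact (commute_nonsing_inv_right hX).mul_right (Commute.refl X)

end Matrix

theorem stmt_2_general {n : ℕ} (K M : Matrix (Fin n) (Fin n) ℝ)
    (hKsym : K.IsSymm) (hMsym : M.IsSymm) (hK : IsUnit K)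
    (Mminus Mplus : ℕ) (z w : ℤ → ℝ)
    (r : ℕ)
    (C : Matrix (Fin n) (Fin n) ℝ)
    (hC : C = (∑ j ∈ Finset.Icc (-(Mminus : ℤ)) (Mplus : ℤ),
        w j • ((K + z j • M)⁻¹ * M)) * (K⁻¹ * M) ^ r) :
    Cᵀ * M = M * C := by
  set J := Finset.Icc (-(Mminus : ℤ)) (Mplus : ℤ)
  have hterm (j : ℤ) : IsSelfAdjointWrt M (w j • ((K + z j • M)⁻¹ * M)) :=
    (isSelfAdjointWrt_inv_mul (hKsym.add (hMsym.smul (z j))) hMsym).smul (w j)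
  have hcomm : Commute (∑ j ∈ J, w j • ((K + z j • M)⁻¹ * M)) ((K⁻¹ * M) ^ r) :=
    Commute.pow_right (Commute.sum_left _ _ _ fun j _ =>
      ((commute_inv_mul_inv_add_smul_mul hK M (z j)).symm.smul_left (w j))) r
  rw [hC]
  exact (IsSelfAdjointWrt.sum J fun j _ => hterm j).mul_of_commute
    ((isSelfAdjointWrt_inv_mul hKsym hMsym).pow r) hcomm

/-- The discretized Whittle–Matérn covariance matrix
`C = (Σ_{j=-M₋}^{M₊} w_j (K + z_jM)⁻¹M)(K⁻¹M)^r` is self-adjoint with respect to the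
`M`-weighted inner product `⟨u,v⟩_M = uᵀMv`, i.e. `CᵀM = MC`. -/
theorem stmt_2 {n : ℕ} (K M : Matrix (Fin n) (Fin n) ℝ)
    (hKsym : K.IsSymm) (hMsym : M.IsSymm) (hK : IsUnit K) (hM : IsUnit M)
    (Mminus Mplus : ℕ) (z w : ℤ → ℝ)
    (hz : ∀ j ∈ Finset.Icc (-(Mminus : ℤ)) (Mplus : ℤ), IsUnit (K + z j • M))
    (r : ℕ)
    (C : Matrix (Fin n) (Fin n) ℝ)
    (hC : C = (∑ j ∈ Finset.Icc (-(Mminus : ℤ)) (Mplus : ℤ),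
        w j • ((K + z j • M)⁻¹ * M)) * (K⁻¹ * M) ^ r) :
    Cᵀ * M = M * C :=
  stmt_2_general K M hKsym hMsym hK Mminus Mplus z w r C hC
end

section
/- Let K, M ∈ ℝ^{n×n} be symmetric positive definite, let z_{-M_-}, …, z_{M_+} be nonnegative real numbers, let w_{-M_-}, …, w_{M_+} be strictly positive real weights, and let r be a natural number. Define C = (Σ_{j=-M_-}^{M_+} w_j (K + z_jM)^{-1}M) (K^{-1}M)^r. Then the matrix Q = C M^{-1} is symmetric positive definite with respect to the standard Euclidean inner product: Qᵀ = Q and xᵀQx > 0 for every nonzero x ∈ ℝⁿ. -/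
open Matrix Finset

/-! Since `M (K⁻¹ M)^r M⁻¹ = (M K⁻¹)^r`, the `j`-th summand of `Q` is
`w_j ((K M⁻¹)^r (K + z_j M))⁻¹`. Every `(K M⁻¹)^m M` is positive definite, being the
congruence `B M Bᴴ` (for `m = 2k`) or `B K Bᴴ` (for `m = 2k + 1`) with `B = (K M⁻¹)^k`.
Hence `(K M⁻¹)^r (K + z_j M) = (K M⁻¹)^(r+1) M + z_j (K M⁻¹)^r M` is positive definite, and
`Q` is a positive combination of inverses of positive definite matrices. -/

namespace Matrix

section Conjugation

variable {n R : Type*} [Fintype n] [DecidableEq n] [CommRing R] {M : Matrix n n R}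

theorem mul_inv_mul_pow_mul_inv (hM : IsUnit M) (K : Matrix n n R) (r : ℕ) :
    M * (K⁻¹ * M) ^ r * M⁻¹ = (M * K⁻¹) ^ r := by
  have hdet := (isUnit_iff_isUnit_det M).mp hM
  have hsemiconj : SemiconjBy M⁻¹ (M * K⁻¹) (K⁻¹ * M) := by
    rw [SemiconjBy, nonsing_inv_mul_cancel_left M _ hdet, mul_nonsing_inv_cancel_right M _ hdet]
  rw [Matrix.mul_assoc, ← (hsemiconj.pow_right r).eq, mul_nonsing_inv_cancel_left M _ hdet]

theorem inv_mul_mul_inv_mul_pow_mul_inv (hM : IsUnit M) (A K : Matrix n n R) (r : ℕ) :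
    A⁻¹ * M * (K⁻¹ * M) ^ r * M⁻¹ = ((K * M⁻¹) ^ r * A)⁻¹ := by
  rw [Matrix.mul_assoc A⁻¹, Matrix.mul_assoc A⁻¹, mul_inv_mul_pow_mul_inv hM, mul_inv_rev,
    ← inv_pow', mul_inv_rev, nonsing_inv_nonsing_inv _ ((isUnit_iff_isUnit_det M).mp hM)]

end Conjugation

namespace PosDef

open scoped ComplexOrder

variable {n 𝕜 : Type*} [Fintype n] [DecidableEq n] [RCLike 𝕜] {K M : Matrix n n 𝕜}

theorem mul_inv_pow_mul (hK : K.PosDef) (hM : M.PosDef) (m : ℕ) :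
    ((K * M⁻¹) ^ m * M).PosDef := by
  have hdet := (isUnit_iff_isUnit_det M).mp hM.isUnit
  induction m using Nat.twoStepInduction with
  | zero => simpa using hM
  | one => simpa [nonsing_inv_mul_cancel_right M _ hdet] using hK
  | more m ih _ =>
    have hconj :
        (K * M⁻¹) ^ (m + 2) * M = (K * M⁻¹) * ((K * M⁻¹) ^ m * M) * (K * M⁻¹)ᴴ := by
      rw [conjTranspose_mul, conjTranspose_nonsing_inv, hK.isHermitian.eq, hM.isHermitian.eq,
        pow_succ, pow_succ']
      simp only [Matrix.mul_assoc, nonsing_inv_mul M hdet, Matrix.mul_one,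
        mul_nonsing_inv_cancel_left M _ hdet]
    rw [hconj]
    exact ih.mul_mul_conjTranspose_same (vecMul_injective_of_isUnit (hK.isUnit.mul hM.inv.isUnit))

theorem mul_inv_pow_mul_add_smul (hK : K.PosDef) (hM : M.PosDef) (r : ℕ) {z : 𝕜}
    (hz : 0 ≤ z) :
    ((K * M⁻¹) ^ r * (K + z • M)).PosDef := by
  have hK_eq : (K * M⁻¹) ^ r * K = (K * M⁻¹) ^ (r + 1) * M := by
    rw [pow_succ, Matrix.mul_assoc,
      nonsing_inv_mul_cancel_right M _ ((isUnit_iff_isUnit_det M).mp hM.isUnit)]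
  rw [Matrix.mul_add, Matrix.mul_smul, hK_eq]
  exact (hK.mul_inv_pow_mul hM (r + 1)).add_posSemidef
    ((hK.mul_inv_pow_mul hM r).posSemidef.smul hz)

end PosDef

end Matrix

/-- For symmetric positive definite stiffness matrix `K` and mass matrix `M`,
nonnegative quadrature nodes `z_j` and strictly positive weights `w_j`, the matrix
`Q = C M⁻¹` with `C = (Σ_{j=-M₋}^{M₊} w_j (K + z_jM)⁻¹M)(K⁻¹M)^r` is symmetric
positive definite with respect to the standard Euclidean inner product. -/
theorem stmt_3 {n : ℕ} (K M : Matrix (Fin n) (Fin n) ℝ)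
    (hK : K.PosDef) (hM : M.PosDef)
    (Mminus Mplus : ℕ) (z w : ℤ → ℝ)
    (hz : ∀ j ∈ Finset.Icc (-(Mminus : ℤ)) (Mplus : ℤ), 0 ≤ z j)
    (hw : ∀ j ∈ Finset.Icc (-(Mminus : ℤ)) (Mplus : ℤ), 0 < w j)
    (r : ℕ)
    (C Q : Matrix (Fin n) (Fin n) ℝ)
    (hC : C = (∑ j ∈ Finset.Icc (-(Mminus : ℤ)) (Mplus : ℤ),
        w j • ((K + z j • M)⁻¹ * M)) * (K⁻¹ * M) ^ r)
    (hQ : Q = C * M⁻¹) :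
    Qᵀ = Q ∧ ∀ x : Fin n → ℝ, x ≠ 0 → 0 < x ⬝ᵥ Q.mulVec x := by
  have hQ_sum : Q = ∑ j ∈ Finset.Icc (-(Mminus : ℤ)) (Mplus : ℤ),
      w j • ((K * M⁻¹) ^ r * (K + z j • M))⁻¹ := by
    rw [hQ, hC, Finset.sum_mul, Finset.sum_mul]
    refine Finset.sum_congr rfl fun j _ => ?_
    rw [smul_mul_assoc, smul_mul_assoc, inv_mul_mul_inv_mul_pow_mul_inv hM.isUnit]
  have hQ_posDef : Q.PosDef := hQ_sum ▸ posDef_sum ⟨0, by simp⟩ fun j hj =>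
    (hK.mul_inv_pow_mul_add_smul hM r (hz j hj)).inv.smul (hw j hj)
  refine ⟨by simpa using hQ_posDef.isHermitian.eq, fun x hx => ?_⟩
  simpa using hQ_posDef.dotProduct_mulVec_pos hx
end

section
/- Let Q ∈ ℝ^{n×n} be symmetric positive definite, let V ∈ ℝ^{n×k} satisfy VᵀQV = I_k, let W ∈ ℝ^{k×k} be orthogonal (WᵀW = I_k), let Φ = diag(φ₁, …, φ_k) with all φ_i ≥ 0, let λ ≠ 0, and set Z = QVW. Then the matrix ZΦZᵀ + λ²Q is invertible and Q(ZΦZᵀ + λ²Q)^{-1}Q = λ^{-2}Q − ZΔZᵀ, where Δ = diag(λ^{-2}φ₁/(φ₁ + λ²), …, λ^{-2}φ_k/(φ_k + λ²)). -/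
open Matrix

/-!
Writing `P = Zᵀ Q⁻¹`, the Q⁻¹-orthonormality `P Z = 1` (which is what `VᵀQV = I` and `WᵀW = I`
amount to for `Z = QVW`) factors `ZΦZᵀ + λ²Q = (ZΦP + λ²) Q`. The low-rank perturbation
`ZΦP + λ²` of a scalar is inverted exactly by `λ⁻² − ZΔP`, because `P Z = 1` collapses the
cross term and `Δ` solves `(Φ + λ²) Δ = λ⁻² Φ` entrywise.
-/

namespace Matrix

variable {n k K : Type*} [Fintype n] [DecidableEq n] [Fintype k] [DecidableEq k] [Field K]

theorem lowRank_add_smul_one_mul_eq_one {Z : Matrix n k K} {P : Matrix k n K}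
    (hPZ : P * Z = 1) {A B : Matrix k k K} {c : K} (hc : c ≠ 0)
    (hAB : (A + c • 1) * B = c⁻¹ • A) :
    (Z * A * P + c • 1) * (c⁻¹ • 1 - Z * B * P) = 1 := by
  have hcollapse : Z * A * P * (Z * B * P) = Z * (A * B) * P := by
    simp only [Matrix.mul_assoc]
    rw [← Matrix.mul_assoc P, hPZ, Matrix.one_mul]
  have hAB' : A * B = c⁻¹ • A - c • B := by
    rw [← hAB]
    simp [add_mul]
  rw [mul_sub, add_mul, add_mul, hcollapse, hAB']
  simp only [Matrix.mul_smul, Matrix.smul_mul, Matrix.mul_one, Matrix.one_mul, Matrix.mul_sub,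
    Matrix.sub_mul, smul_smul, inv_mul_cancel₀ hc, one_smul]
  abel

theorem isUnit_and_mul_inv_mul_eq_of_mul_inv_mul_eq_one {Q : Matrix n n K} (hQ : IsUnit Q.det)
    {Z : Matrix n k K} {Y : Matrix k n K} (hYZ : Y * Q⁻¹ * Z = 1) {A B : Matrix k k K} {c : K}
    (hc : c ≠ 0) (hAB : (A + c • 1) * B = c⁻¹ • A) :
    IsUnit (Z * A * Y + c • Q) ∧ Q * (Z * A * Y + c • Q)⁻¹ * Q = c⁻¹ • Q - Z * B * Y := by
  set X := Z * A * (Y * Q⁻¹) + c • 1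
  have hfactor : Z * A * Y + c • Q = X * Q := by
    simp only [X, add_mul, Matrix.smul_mul, Matrix.one_mul, Matrix.mul_assoc, nonsing_inv_mul Q hQ,
      Matrix.mul_one]
  have hX : X * (c⁻¹ • 1 - Z * B * (Y * Q⁻¹)) = 1 :=
    lowRank_add_smul_one_mul_eq_one hYZ hc hAB
  rw [hfactor, mul_inv_rev, inv_eq_right_inv hX]
  refine ⟨(IsUnit.of_mul_eq_one _ hX).mul ((isUnit_iff_isUnit_det Q).2 hQ), ?_⟩
  simp only [Matrix.sub_mul, Matrix.smul_mul, Matrix.mul_assoc, mul_nonsing_inv_cancel_left Q _ hQ,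
    Matrix.one_mul, nonsing_inv_mul Q hQ, Matrix.mul_one]

theorem transpose_mul_inv_mul_eq_one {Q : Matrix n n K} (hQsymm : Qᵀ = Q) (hQ : IsUnit Q.det)
    {V : Matrix n k K} (hV : Vᵀ * Q * V = 1) {W : Matrix k k K} (hW : Wᵀ * W = 1) :
    (Q * V * W)ᵀ * Q⁻¹ * (Q * V * W) = 1 := by
  calc (Q * V * W)ᵀ * Q⁻¹ * (Q * V * W) = Wᵀ * (Vᵀ * (Q * (Q⁻¹ * (Q * V)))) * W := by
        simp only [transpose_mul, hQsymm, Matrix.mul_assoc]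
    _ = 1 := by rw [mul_nonsing_inv_cancel_left Q _ hQ, ← Matrix.mul_assoc Vᵀ, hV,
        Matrix.mul_one, hW]

theorem diagonal_add_smul_one_mul_diagonal {φ : k → K} {c : K} (hφc : ∀ i, φ i + c ≠ 0) :
    (diagonal φ + c • 1) * diagonal (fun i => c⁻¹ * φ i / (φ i + c)) = c⁻¹ • diagonal φ := by
  rw [smul_one_eq_diagonal, diagonal_add, diagonal_mul_diagonal, ← diagonal_smul]
  congr 1
  ext i
  simp only [Pi.smul_apply, smul_eq_mul]
  field_simp [hφc i]

end Matrix

/-- Woodbury-identity computation underlying the low-rank posterior covariance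
approximation: with `Q` SPD, `VᵀQV = I`, `W` orthogonal, `Φ = diag(φ)` with `φ ≥ 0`,
`λ ≠ 0` and `Z = QVW`, the matrix `ZΦZᵀ + λ²Q` is invertible and
`Q(ZΦZᵀ + λ²Q)⁻¹Q = λ⁻²Q − ZΔZᵀ` where `Δ = diag(λ⁻²φᵢ/(φᵢ + λ²))`. -/
theorem stmt_8 {n k : ℕ} (Q : Matrix (Fin n) (Fin n) ℝ) (hQ : Q.PosDef)
    (V : Matrix (Fin n) (Fin k) ℝ) (hV : Vᵀ * Q * V = 1)
    (W : Matrix (Fin k) (Fin k) ℝ) (hW : Wᵀ * W = 1)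
    (φ : Fin k → ℝ) (hφ : ∀ i, 0 ≤ φ i)
    (lam : ℝ) (hlam : lam ≠ 0)
    (Z : Matrix (Fin n) (Fin k) ℝ) (hZ : Z = Q * V * W) :
    IsUnit (Z * Matrix.diagonal φ * Zᵀ + lam ^ 2 • Q) ∧
    Q * (Z * Matrix.diagonal φ * Zᵀ + lam ^ 2 • Q)⁻¹ * Q
      = (lam ^ 2)⁻¹ • Q
        - Z * Matrix.diagonal (fun i => (lam ^ 2)⁻¹ * φ i / (φ i + lam ^ 2)) * Zᵀ := by
  have hQdet : IsUnit Q.det := isUnit_iff_ne_zero.2 hQ.det_pos.ne'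
  have horth : Zᵀ * Q⁻¹ * Z = 1 := hZ ▸ transpose_mul_inv_mul_eq_one hQ.isHermitian.eq hQdet hV hW
  have hlam2 : 0 < lam ^ 2 := by positivity
  have hΦ := diagonal_add_smul_one_mul_diagonal fun i =>
    (add_pos_of_nonneg_of_pos (hφ i) hlam2).ne'
  exact isUnit_and_mul_inv_mul_eq_of_mul_inv_mul_eq_one hQdet horth hlam2.ne' hΦ
end

section
/- Let Γ ∈ ℝ^{m×m} and Q ∈ ℝ^{n×n} be symmetric positive definite, let F ∈ ℝ^{m×n}, let U ∈ ℝ^{m×(k+1)} satisfy UᵀΓ^{-1}U = I_{k+1}, let V ∈ ℝ^{n×k} satisfy VᵀQV = I_k, let B ∈ ℝ^{(k+1)×k} satisfy FQV = UB, let δ₁ ∈ ℝ and b = δ₁Ue₁ where e₁ is the first standard basis vector of ℝ^{k+1}, and let λ ∈ ℝ. Then for every z ∈ ℝ^k: ½(FQVz − b)ᵀΓ^{-1}(FQVz − b) + (λ²/2)(Vz)ᵀQ(Vz) = ½‖Bz − δ₁e₁‖₂² + (λ²/2)‖z‖₂². -/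
open Matrix

theorem Matrix.mulVec_dotProduct_mulVec_mulVec {R l o : Type*} [CommSemiring R] [Fintype l]
    [Fintype o] (A : Matrix l o R) (P : Matrix l l R) (w : o → R) :
    A *ᵥ w ⬝ᵥ P *ᵥ (A *ᵥ w) = w ⬝ᵥ (Aᵀ * P * A) *ᵥ w := by
  simp only [dotProduct_mulVec, vecMul_vecMul]
  rw [← vecMul_transpose, vecMul_vecMul, Matrix.mul_assoc]

theorem stmt_10_general {m n k : ℕ}
    (Γ : Matrix (Fin m) (Fin m) ℝ)
    (Q : Matrix (Fin n) (Fin n) ℝ)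
    (F : Matrix (Fin m) (Fin n) ℝ)
    (U : Matrix (Fin m) (Fin (k + 1)) ℝ) (hU : Uᵀ * Γ⁻¹ * U = 1)
    (V : Matrix (Fin n) (Fin k) ℝ) (hV : Vᵀ * Q * V = 1)
    (B : Matrix (Fin (k + 1)) (Fin k) ℝ) (hB : F * Q * V = U * B)
    (δ₁ : ℝ) (e₁ : Fin (k + 1) → ℝ)
    (b : Fin m → ℝ) (hb : b = δ₁ • U.mulVec e₁)
    (lam : ℝ) :
    ∀ z : Fin k → ℝ,
      (1 / 2) * ((F.mulVec (Q.mulVec (V.mulVec z)) - b) ⬝ᵥ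
          Γ⁻¹.mulVec (F.mulVec (Q.mulVec (V.mulVec z)) - b)) +
        (lam ^ 2 / 2) * ((V.mulVec z) ⬝ᵥ Q.mulVec (V.mulVec z))
      = (1 / 2) * ((B.mulVec z - δ₁ • e₁) ⬝ᵥ (B.mulVec z - δ₁ • e₁)) +
        (lam ^ 2 / 2) * (z ⬝ᵥ z) := by
  intro z
  have residual : F *ᵥ Q *ᵥ V *ᵥ z - b = U *ᵥ (B *ᵥ z - δ₁ • e₁) := by
    rw [hb, mulVec_sub, mulVec_smul, mulVec_mulVec, mulVec_mulVec, hB, ← mulVec_mulVec]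
  rw [residual, mulVec_dotProduct_mulVec_mulVec, hU, mulVec_dotProduct_mulVec_mulVec V Q z, hV,
    one_mulVec, one_mulVec]

/-- Identity justifying the GenHyBR projected problem: after `k` steps of the
generalized Golub–Kahan bidiagonalization with `FQV = UB`, `UᵀΓ⁻¹U = I`, `VᵀQV = I`
and `b = δ₁Ue₁`, the Tikhonov functional restricted to the search space `m̂ = Vz`
reduces exactly to `½‖Bz − δ₁e₁‖₂² + (λ²/2)‖z‖₂²`. -/
theorem stmt_10 {m n k : ℕ}
    (Γ : Matrix (Fin m) (Fin m) ℝ) (hΓ : Γ.PosDef)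
    (Q : Matrix (Fin n) (Fin n) ℝ) (hQ : Q.PosDef)
    (F : Matrix (Fin m) (Fin n) ℝ)
    (U : Matrix (Fin m) (Fin (k + 1)) ℝ) (hU : Uᵀ * Γ⁻¹ * U = 1)
    (V : Matrix (Fin n) (Fin k) ℝ) (hV : Vᵀ * Q * V = 1)
    (B : Matrix (Fin (k + 1)) (Fin k) ℝ) (hB : F * Q * V = U * B)
    (δ₁ : ℝ) (e₁ : Fin (k + 1) → ℝ) (he₁ : e₁ = Pi.single (0 : Fin (k + 1)) 1)
    (b : Fin m → ℝ) (hb : b = δ₁ • U.mulVec e₁)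
    (lam : ℝ) :
    ∀ z : Fin k → ℝ,
      (1 / 2) * ((F.mulVec (Q.mulVec (V.mulVec z)) - b) ⬝ᵥ
          Γ⁻¹.mulVec (F.mulVec (Q.mulVec (V.mulVec z)) - b)) +
        (lam ^ 2 / 2) * ((V.mulVec z) ⬝ᵥ Q.mulVec (V.mulVec z))
      = (1 / 2) * ((B.mulVec z - δ₁ • e₁) ⬝ᵥ (B.mulVec z - δ₁ • e₁)) +
        (lam ^ 2 / 2) * (z ⬝ᵥ z) :=
  stmt_10_general Γ Q F U hU V hV B hB δ₁ e₁ b hb lam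
end
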